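/- There exists a constant C > 0 such that for every n ∈ ℕ, n ≥ 1, there exists a constant c_n > 0 with c_n · ρ_n(ū,v̄)^{1+C/n} ≤ ρ(γ_n(ū), γ_n(v̄)) ≤ ρ_n(ū,v̄) for all ū, v̄ ∈ (Λⁿ)^ℕ. -/

import Mathlib

open Set Filter MeasureTheory Metric

noncomputable section

/-- Composition of the maps of an IFS along a finite word (in order). -/
def compWord {Λ : Type*} (f : Λ → ℝ → ℝ) : List Λ → ℝ → ℝ
  | [] => id
  | i :: w => f i ∘ compWord f w

/-- The chain-rule derivative of `compWord f w`, expressed via the derivatives `f'`. -/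
def wordDeriv {Λ : Type*} (f f' : Λ → ℝ → ℝ) : List Λ → ℝ → ℝ
  | [] => fun _ => 1
  | i :: w => fun x => f' i (compWord f w x) * wordDeriv f f' w x

/-- `‖f_w'‖`: the sup over `[0,1]` of `|f_w'|`. -/
def wordDerivNorm {Λ : Type*} (f f' : Λ → ℝ → ℝ) (w : List Λ) : ℝ :=
  sSup ((fun x => |wordDeriv f f' w x|) '' Icc (0:ℝ) 1)

/-- A self-conformal IFS on `[0,1]`: finitely many uniformly contracting differentiable maps
with Hölder continuous non-vanishing derivatives. -/
structure ConformalIFS (Λ : Type*) where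
  f : Λ → ℝ → ℝ
  f' : Λ → ℝ → ℝ
  mapsTo : ∀ i, MapsTo (f i) (Icc (0:ℝ) 1) (Icc (0:ℝ) 1)
  hasDeriv : ∀ i, ∀ x ∈ Icc (0:ℝ) 1, HasDerivWithinAt (f i) (f' i x) (Icc (0:ℝ) 1) x
  exponent : ℝ
  exponent_pos : 0 < exponent
  holder : ∀ i, ∃ C : ℝ, ∀ x ∈ Icc (0:ℝ) 1, ∀ y ∈ Icc (0:ℝ) 1,
    |f' i x - f' i y| ≤ C * |x - y| ^ exponent
  nonvanishing : ∀ i, ∀ x ∈ Icc (0:ℝ) 1, f' i x ≠ 0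
  ratio : ℝ
  ratio_pos : 0 < ratio
  ratio_lt_one : ratio < 1
  contracting : ∀ i, ∀ x ∈ Icc (0:ℝ) 1, ∀ y ∈ Icc (0:ℝ) 1, |f i x - f i y| ≤ ratio * |x - y|

/-- The open set condition (with an open subset of `[0,1]`) for a conformal IFS. -/
def CoordOSC {Λ : Type*} (F : ConformalIFS Λ) : Prop :=
  ∃ U : Set ℝ, U.Nonempty ∧ U ⊆ Icc 0 1 ∧ (∃ O : Set ℝ, IsOpen O ∧ U = O ∩ Icc 0 1) ∧
    (∀ i, F.f i '' U ⊆ U) ∧ Pairwise fun i i' => Disjoint (F.f i '' U) (F.f i' '' U)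

end
noncomputable section
/-- Generic "longest common prefix" distance on sequences: `0` for equal sequences, and
otherwise the value `val` of the longest common initial segment. -/
noncomputable def rhoDist {Γ : Type*} (val : List Γ → ℝ) (u v : ℕ → Γ) : ℝ := by
  classical
  exact if h : u = v then 0
    else val (List.ofFn fun k : Fin (Nat.find (Function.ne_iff.mp h)) => u k.val)

/-- The concatenation map `(Λⁿ)^ℕ → Λ^ℕ`. -/
def concatMap {Λ : Type*} (n : ℕ) (hn : 0 < n) (u : ℕ → (Fin n → Λ)) : ℕ → Λ :=
  fun m => u (m / n) ⟨m % n, Nat.mod_lt m hn⟩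

/-- The metric `ρ` on `Λ^ℕ`: `ρ(u,v) = ‖f'_{u∧v}‖`. -/
noncomputable def rho {Λ : Type*} (F : ConformalIFS Λ) (u v : ℕ → Λ) : ℝ :=
  rhoDist (wordDerivNorm F.f F.f') u v

/-- The metric `ρ_n` on `(Λⁿ)^ℕ`: the product of `‖f'_{ūₖ}‖` over the initial blocks on which
the two sequences agree. -/
noncomputable def rhoN {Λ : Type*} (F : ConformalIFS Λ) (n : ℕ) (u v : ℕ → (Fin n → Λ)) : ℝ :=
  rhoDist (fun L => (L.map fun blk => wordDerivNorm F.f F.f' (List.ofFn blk)).prod) u v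

/-!
Write the common prefix of `γₙ ū` and `γₙ v̄` as `W₁ ⋯ Wₘ T`, where `W₁, …, Wₘ` are the common
blocks (`|Wₖ| = n`) and `|T| < n`, so that `ρₙ(ū, v̄) = P := ∏ ‖f'_{Wₖ}‖`. Submultiplicativity
of `w ↦ ‖f'_w‖` and `‖f'_T‖ ≤ 1` give the upper bound. For the lower bound, bounded distortion
(`‖f'_w‖ ≤ D |f'_w(y)|` for every word `w` and point `y`, from the Hölder continuity of the `f_i'`
and the geometric shrinking of the images of `[0,1]`) gives `‖f'_{W₁⋯WₘT}‖ ≥ b^n D^{-m} P`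
with `0 < b ≤ |f_i'|`. Finally `P ≤ λ^{nm}`, so choosing `C` with `λ^C ≤ D⁻¹` yields
`P^{C/n} ≤ D^{-m}`.
-/

open Topology

section RealAnalysis

theorem nhdsWithin_Icc_diff_singleton_neBot {α : Type*} [TopologicalSpace α] [LinearOrder α]
    [OrderTopology α] [DenselyOrdered α] {a b x : α} (hab : a < b) (hx : x ∈ Icc a b) :
    (𝓝[Icc a b \ {x}] x).NeBot := by
  rcases hx.2.lt_or_eq with hxb | rfl
  · exact (left_nhdsWithin_Ioo_neBot hxb).mono <| nhdsWithin_mono _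
      fun y hy => ⟨⟨hx.1.trans hy.1.le, hy.2.le⟩, hy.1.ne'⟩
  · exact (right_nhdsWithin_Ioo_neBot hab).mono <| nhdsWithin_mono _
      fun y hy => ⟨Ioo_subset_Icc_self hy, hy.2.ne⟩

theorem abs_le_of_hasDerivWithinAt_of_abs_sub_le {f : ℝ → ℝ} {f' K x : ℝ} {s : Set ℝ}
    [(𝓝[s \ {x}] x).NeBot] (hf : HasDerivWithinAt f f' s x)
    (hlip : ∀ y ∈ s, |f y - f x| ≤ K * |y - x|) : |f'| ≤ K := by
  refine le_of_tendsto (hasDerivWithinAt_iff_tendsto_slope.1 hf).abs ?_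
  filter_upwards [self_mem_nhdsWithin] with y ⟨hy, hyx⟩
  rw [slope_def_field, abs_div, div_le_iff₀ (abs_pos.2 (sub_ne_zero.2 hyx))]
  exact hlip y hy

theorem continuousOn_of_abs_sub_le_rpow {g : ℝ → ℝ} {s : Set ℝ} {C α : ℝ} (hα : 0 < α)
    (hg : ∀ x ∈ s, ∀ y ∈ s, |g x - g y| ≤ C * |x - y| ^ α) : ContinuousOn g s := by
  intro x hx
  rw [ContinuousWithinAt, tendsto_iff_norm_sub_tendsto_zero]
  have hbound : Tendsto (fun y => C * |y - x| ^ α) (𝓝[s] x) (𝓝 0) := by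
    have hcont : Continuous fun y => C * |y - x| ^ α := by
      have := Real.continuous_rpow_const hα.le
      fun_prop
    simpa [Real.zero_rpow hα.ne'] using (hcont.tendsto x).mono_left nhdsWithin_le_nhds
  exact squeeze_zero' (Eventually.of_forall fun _ => norm_nonneg _)
    (eventually_nhdsWithin_of_forall fun y hy => hg y hy x hx) hbound

theorem exists_pos_rpow_le {r δ : ℝ} (hr₀ : 0 < r) (hr₁ : r < 1) (hδ : 0 < δ) :
    ∃ C : ℝ, 0 < C ∧ r ^ C ≤ δ :=
  ⟨max (Real.logb r δ) 1, by positivity,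
    (Real.rpow_le_rpow_of_exponent_ge hr₀ hr₁.le (le_max_left _ _)).trans_eq
      (Real.rpow_logb hr₀ hr₁.ne hδ)⟩

theorem rpow_div_le_pow_of_le_pow_mul {P r C : ℝ} {n m : ℕ} (hP : 0 ≤ P) (hr : 0 ≤ r)
    (hC : 0 ≤ C) (hn : 0 < n) (h : P ≤ r ^ (n * m)) : P ^ (C / n) ≤ (r ^ C) ^ m := by
  calc P ^ (C / n) ≤ (r ^ (n * m)) ^ (C / n) := by gcongr
    _ = (r ^ C) ^ m := by
      rw [← Real.rpow_natCast r, ← Real.rpow_mul hr, ← Real.rpow_natCast (r ^ C),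
        ← Real.rpow_mul hr]
      congr 1
      field_simp
      push_cast
      ring

end RealAnalysis

section Sequences

variable {Γ : Type*}

theorem rhoDist_self (val : List Γ → ℝ) (u : ℕ → Γ) : rhoDist val u u = 0 := by
  simp [rhoDist]

theorem rhoDist_of_ne (val : List Γ → ℝ) {u v : ℕ → Γ} (h : u ≠ v) :
    ∃ M, (∀ k < M, u k = v k) ∧ u M ≠ v M ∧
      rhoDist val u v = val (List.ofFn fun k : Fin M => u k) := by
  classical
  refine ⟨Nat.find (Function.ne_iff.1 h), fun k hk => not_not.1 (Nat.find_min _ hk),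
    Nat.find_spec (Function.ne_iff.1 h), ?_⟩
  simp only [rhoDist, dif_neg h]

variable {n : ℕ} (hn : 0 < n)

theorem concatMap_apply (u : ℕ → Fin n → Γ) (k : ℕ) (j : Fin n) :
    concatMap n hn u (n * k + j) = u k j := by
  have hdiv : (n * k + j) / n = k := by rw [Nat.mul_add_div hn, Nat.div_eq_of_lt j.isLt, add_zero]
  simp only [concatMap, hdiv, Nat.mul_add_mod, Nat.mod_eq_of_lt j.isLt]

theorem concatMap_injective :
    Function.Injective (concatMap n hn : (ℕ → Fin n → Γ) → ℕ → Γ) := fun u v huv =>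
  funext fun k => funext fun j => by
    simpa only [concatMap_apply] using congrFun huv (n * k + j)

theorem ofFn_concatMap (u : ℕ → Fin n → Γ) (m : ℕ) :
    (List.ofFn fun k : Fin (n * m) => concatMap n hn u k)
      = (List.ofFn fun k : Fin m => List.ofFn (u k)).flatten := by
  induction m with
  | zero => simp
  | succ m ih =>
    change (List.ofFn fun k : Fin (n * m + n) => concatMap n hn u k) = _
    rw [List.ofFn_add, List.ofFn_succ_last, List.flatten_concat]
    simp only [Fin.val_castLE, Fin.val_natAdd, Fin.val_castSucc, Fin.val_last, concatMap_apply, ih]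

theorem exists_ofFn_concatMap_eq_flatten_append {u v : ℕ → Fin n → Γ} {m L : ℕ}
    (hm : ∀ k < m, u k = v k) (hmv : u m ≠ v m)
    (hL : ∀ k < L, concatMap n hn u k = concatMap n hn v k)
    (hLv : concatMap n hn u L ≠ concatMap n hn v L) :
    ∃ T : List Γ, T.length < n ∧
      (List.ofFn fun k : Fin L => concatMap n hn u k)
        = (List.ofFn fun k : Fin m => List.ofFn (u k)).flatten ++ T := by
  have hmL : n * m ≤ L := by
    by_contra! hLm
    exact hLv (by simp only [concatMap, hm _ (Nat.div_lt_of_lt_mul hLm)])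
  obtain ⟨j, hj⟩ := Function.ne_iff.1 hmv
  obtain ⟨t, rfl⟩ := Nat.exists_eq_add_of_le hmL
  refine ⟨List.ofFn fun k : Fin t => concatMap n hn u (n * m + k), ?_, ?_⟩
  · rw [List.length_ofFn]
    by_contra! hnt
    exact hj (by simpa only [concatMap_apply] using hL (n * m + j) (by omega))
  · rw [List.ofFn_add, ← ofFn_concatMap hn]
    simp only [Fin.val_castLE, Fin.val_natAdd]

end Sequences

namespace ConformalIFS

variable {Λ : Type*} (F : ConformalIFS Λ)

theorem continuousOn_f (i : Λ) : ContinuousOn (F.f i) (Icc 0 1) :=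
  fun x hx => (F.hasDeriv i x hx).continuousWithinAt

theorem continuousOn_f' (i : Λ) : ContinuousOn (F.f' i) (Icc 0 1) :=
  let ⟨_, hC⟩ := F.holder i
  continuousOn_of_abs_sub_le_rpow F.exponent_pos hC

theorem abs_f'_le_ratio (i : Λ) {x : ℝ} (hx : x ∈ Icc (0 : ℝ) 1) : |F.f' i x| ≤ F.ratio :=
  have := nhdsWithin_Icc_diff_singleton_neBot zero_lt_one hx
  abs_le_of_hasDerivWithinAt_of_abs_sub_le (F.hasDeriv i x hx)
    fun y hy => F.contracting i y hy x hx

theorem compWord_mapsTo (w : List Λ) : MapsTo (compWord F.f w) (Icc 0 1) (Icc 0 1) := by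
  induction w with
  | nil => exact mapsTo_id _
  | cons i w ih => exact (F.mapsTo i).comp ih

theorem continuousOn_compWord (w : List Λ) : ContinuousOn (compWord F.f w) (Icc 0 1) := by
  induction w with
  | nil => exact continuousOn_id
  | cons i w ih => exact (F.continuousOn_f i).comp ih (F.compWord_mapsTo w)

theorem continuousOn_wordDeriv (w : List Λ) : ContinuousOn (wordDeriv F.f F.f' w) (Icc 0 1) := by
  induction w with
  | nil => exact continuousOn_const
  | cons i w ih =>
    exact ((F.continuousOn_f' i).comp (F.continuousOn_compWord w) (F.compWord_mapsTo w)).mul ih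

theorem compWord_append (w₁ w₂ : List Λ) (x : ℝ) :
    compWord F.f (w₁ ++ w₂) x = compWord F.f w₁ (compWord F.f w₂ x) := by
  induction w₁ with
  | nil => rfl
  | cons i w ih => simp [compWord, ih]

theorem wordDeriv_append (w₁ w₂ : List Λ) (x : ℝ) :
    wordDeriv F.f F.f' (w₁ ++ w₂) x
      = wordDeriv F.f F.f' w₁ (compWord F.f w₂ x) * wordDeriv F.f F.f' w₂ x := by
  induction w₁ with
  | nil => simp [wordDeriv]
  | cons i w ih => simp [wordDeriv, ih, compWord_append, mul_assoc]

theorem abs_compWord_sub_le (w : List Λ) {x y : ℝ} (hx : x ∈ Icc (0 : ℝ) 1)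
    (hy : y ∈ Icc (0 : ℝ) 1) :
    |compWord F.f w x - compWord F.f w y| ≤ F.ratio ^ w.length * |x - y| := by
  induction w with
  | nil => simp [compWord]
  | cons i w ih =>
    calc |F.f i (compWord F.f w x) - F.f i (compWord F.f w y)|
        ≤ F.ratio * |compWord F.f w x - compWord F.f w y| :=
          F.contracting i _ (F.compWord_mapsTo w hx) _ (F.compWord_mapsTo w hy)
      _ ≤ F.ratio * (F.ratio ^ w.length * |x - y|) := by gcongr; exact F.ratio_pos.le
      _ = F.ratio ^ (i :: w).length * |x - y| := by rw [List.length_cons, pow_succ]; ring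

theorem abs_wordDeriv_le_pow (w : List Λ) {x : ℝ} (hx : x ∈ Icc (0 : ℝ) 1) :
    |wordDeriv F.f F.f' w x| ≤ F.ratio ^ w.length := by
  induction w with
  | nil => simp [wordDeriv]
  | cons i w ih =>
    rw [wordDeriv, abs_mul, List.length_cons, pow_succ']
    exact mul_le_mul (F.abs_f'_le_ratio i (F.compWord_mapsTo w hx)) ih (abs_nonneg _)
      F.ratio_pos.le

theorem pow_le_abs_wordDeriv {b : ℝ} (hb : 0 ≤ b)
    (hbf' : ∀ i, ∀ x ∈ Icc (0 : ℝ) 1, b ≤ |F.f' i x|) (w : List Λ) {x : ℝ}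
    (hx : x ∈ Icc (0 : ℝ) 1) : b ^ w.length ≤ |wordDeriv F.f F.f' w x| := by
  induction w with
  | nil => simp [wordDeriv]
  | cons i w ih =>
    rw [wordDeriv, abs_mul, List.length_cons, pow_succ']
    exact mul_le_mul (hbf' i _ (F.compWord_mapsTo w hx)) ih (pow_nonneg hb _) (abs_nonneg _)

theorem abs_wordDeriv_le_wordDerivNorm (w : List Λ) {x : ℝ} (hx : x ∈ Icc (0 : ℝ) 1) :
    |wordDeriv F.f F.f' w x| ≤ wordDerivNorm F.f F.f' w :=
  le_csSup (isCompact_Icc.image_of_continuousOn (F.continuousOn_wordDeriv w).abs).bddAbove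
    ⟨x, hx, rfl⟩

theorem wordDerivNorm_nonneg (w : List Λ) : 0 ≤ wordDerivNorm F.f F.f' w :=
  (abs_nonneg _).trans (F.abs_wordDeriv_le_wordDerivNorm w (left_mem_Icc.2 zero_le_one))

theorem exists_wordDerivNorm_eq (w : List Λ) :
    ∃ x ∈ Icc (0 : ℝ) 1, wordDerivNorm F.f F.f' w = |wordDeriv F.f F.f' w x| := by
  obtain ⟨x, hx, hmax⟩ := isCompact_Icc.exists_isMaxOn (nonempty_Icc.2 zero_le_one)
    (F.continuousOn_wordDeriv w).abs
  refine ⟨x, hx, le_antisymm ?_ (F.abs_wordDeriv_le_wordDerivNorm w hx)⟩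
  exact csSup_le ((nonempty_Icc.2 zero_le_one).image _) (forall_mem_image.2 fun y hy => hmax hy)

theorem wordDerivNorm_le_pow (w : List Λ) : wordDerivNorm F.f F.f' w ≤ F.ratio ^ w.length :=
  let ⟨_, hx, hxw⟩ := F.exists_wordDerivNorm_eq w
  hxw ▸ F.abs_wordDeriv_le_pow w hx

theorem wordDerivNorm_append_le (w₁ w₂ : List Λ) :
    wordDerivNorm F.f F.f' (w₁ ++ w₂)
      ≤ wordDerivNorm F.f F.f' w₁ * wordDerivNorm F.f F.f' w₂ := by
  obtain ⟨x, hx, hxw⟩ := F.exists_wordDerivNorm_eq (w₁ ++ w₂)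
  rw [hxw, wordDeriv_append, abs_mul]
  exact mul_le_mul (F.abs_wordDeriv_le_wordDerivNorm w₁ (F.compWord_mapsTo w₂ hx))
    (F.abs_wordDeriv_le_wordDerivNorm w₂ hx) (abs_nonneg _) (F.wordDerivNorm_nonneg w₁)

theorem wordDerivNorm_flatten_le (Ws : List (List Λ)) :
    wordDerivNorm F.f F.f' Ws.flatten ≤ (Ws.map (wordDerivNorm F.f F.f')).prod := by
  induction Ws with
  | nil =>
    obtain ⟨x, hx, hxw⟩ := F.exists_wordDerivNorm_eq []
    simp [hxw, wordDeriv]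
  | cons W Ws ih =>
    rw [List.flatten_cons, List.map_cons, List.prod_cons]
    exact (F.wordDerivNorm_append_le W _).trans
      (mul_le_mul_of_nonneg_left ih (F.wordDerivNorm_nonneg W))

theorem wordDerivNorm_flatten_append_le (Ws : List (List Λ)) (T : List Λ) :
    wordDerivNorm F.f F.f' (Ws.flatten ++ T) ≤ (Ws.map (wordDerivNorm F.f F.f')).prod := by
  have hT : wordDerivNorm F.f F.f' T ≤ 1 :=
    (F.wordDerivNorm_le_pow T).trans (pow_le_one₀ F.ratio_pos.le F.ratio_lt_one.le)
  calc wordDerivNorm F.f F.f' (Ws.flatten ++ T)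
      ≤ wordDerivNorm F.f F.f' Ws.flatten * wordDerivNorm F.f F.f' T :=
        F.wordDerivNorm_append_le _ T
    _ ≤ wordDerivNorm F.f F.f' Ws.flatten := mul_le_of_le_one_right (F.wordDerivNorm_nonneg _) hT
    _ ≤ (Ws.map (wordDerivNorm F.f F.f')).prod := F.wordDerivNorm_flatten_le Ws

theorem prod_map_wordDerivNorm_le {n : ℕ} (Ws : List (List Λ)) (hWs : ∀ W ∈ Ws, W.length = n) :
    (Ws.map (wordDerivNorm F.f F.f')).prod ≤ F.ratio ^ (n * Ws.length) := by
  induction Ws with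
  | nil => simp
  | cons W Ws ih =>
    rw [List.map_cons, List.prod_cons, List.length_cons, mul_add_one, pow_add, mul_comm]
    refine mul_le_mul (ih fun V hV => hWs V (List.mem_cons_of_mem W hV)) ?_
      (F.wordDerivNorm_nonneg W) (pow_nonneg F.ratio_pos.le _)
    exact hWs W List.mem_cons_self ▸ F.wordDerivNorm_le_pow W

section BoundedDistortion

theorem abs_f'_le_exp_mul {b H : ℝ} (hb : 0 < b) (hH : 0 ≤ H)
    (hbf' : ∀ i, ∀ x ∈ Icc (0 : ℝ) 1, b ≤ |F.f' i x|)
    (hHf' : ∀ i, ∀ x ∈ Icc (0 : ℝ) 1, ∀ y ∈ Icc (0 : ℝ) 1,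
      |F.f' i x - F.f' i y| ≤ H * |x - y| ^ F.exponent)
    (i : Λ) {x y : ℝ} (hx : x ∈ Icc (0 : ℝ) 1) (hy : y ∈ Icc (0 : ℝ) 1) :
    |F.f' i x| ≤ Real.exp (H / b * |x - y| ^ F.exponent) * |F.f' i y| := by
  set δ := |x - y| ^ F.exponent
  have hδ : 0 ≤ δ := by positivity
  -- the Hölder error `H δ` is a multiplicative error since `|f' i y| ≥ b`
  have hrel : H * δ ≤ H / b * δ * |F.f' i y| := by
    calc H * δ = H / b * δ * b := by field_simp
      _ ≤ H / b * δ * |F.f' i y| := by gcongr; exact hbf' i y hy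
  calc |F.f' i x| ≤ |F.f' i y| + H * δ := by
        linarith [abs_sub_abs_le_abs_sub (F.f' i x) (F.f' i y), hHf' i x hx y hy]
    _ ≤ (H / b * δ + 1) * |F.f' i y| := by linarith
    _ ≤ Real.exp (H / b * δ) * |F.f' i y| := by gcongr; exact Real.add_one_le_exp _

theorem abs_compWord_sub_rpow_le (w : List Λ) {x y : ℝ} (hx : x ∈ Icc (0 : ℝ) 1)
    (hy : y ∈ Icc (0 : ℝ) 1) :
    |compWord F.f w x - compWord F.f w y| ^ F.exponent ≤ (F.ratio ^ F.exponent) ^ w.length := by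
  have hxy : |x - y| ≤ 1 := abs_sub_le_iff.2 ⟨by linarith [hx.2, hy.1], by linarith [hx.1, hy.2]⟩
  have hr : 0 ≤ F.ratio := F.ratio_pos.le
  calc |compWord F.f w x - compWord F.f w y| ^ F.exponent
      ≤ (F.ratio ^ w.length) ^ F.exponent := by
        refine Real.rpow_le_rpow (abs_nonneg _) ?_ F.exponent_pos.le
        calc _ ≤ F.ratio ^ w.length * |x - y| := F.abs_compWord_sub_le w hx hy
          _ ≤ F.ratio ^ w.length := mul_le_of_le_one_right (by positivity) hxy
    _ = (F.ratio ^ F.exponent) ^ w.length := by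
        rw [← Real.rpow_natCast, ← Real.rpow_mul hr, mul_comm, Real.rpow_mul hr,
          Real.rpow_natCast]

theorem abs_wordDeriv_le_exp_mul {b H : ℝ} (hb : 0 < b) (hH : 0 ≤ H)
    (hbf' : ∀ i, ∀ x ∈ Icc (0 : ℝ) 1, b ≤ |F.f' i x|)
    (hHf' : ∀ i, ∀ x ∈ Icc (0 : ℝ) 1, ∀ y ∈ Icc (0 : ℝ) 1,
      |F.f' i x - F.f' i y| ≤ H * |x - y| ^ F.exponent)
    (w : List Λ) {x y : ℝ} (hx : x ∈ Icc (0 : ℝ) 1) (hy : y ∈ Icc (0 : ℝ) 1) :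
    |wordDeriv F.f F.f' w x|
      ≤ Real.exp (H / b * ∑ k ∈ Finset.range w.length, (F.ratio ^ F.exponent) ^ k)
          * |wordDeriv F.f F.f' w y| := by
  induction w with
  | nil => simp [wordDeriv]
  | cons i w ih =>
    have hstep := F.abs_f'_le_exp_mul hb hH hbf' hHf' i (F.compWord_mapsTo w hx)
      (F.compWord_mapsTo w hy)
    have hgap := F.abs_compWord_sub_rpow_le w hx hy
    calc |wordDeriv F.f F.f' (i :: w) x|
        = |F.f' i (compWord F.f w x)| * |wordDeriv F.f F.f' w x| := by
          rw [wordDeriv, abs_mul]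
      _ ≤ (Real.exp (H / b * (F.ratio ^ F.exponent) ^ w.length) * |F.f' i (compWord F.f w y)|)
            * (Real.exp (H / b * ∑ k ∈ Finset.range w.length, (F.ratio ^ F.exponent) ^ k)
              * |wordDeriv F.f F.f' w y|) := by
          gcongr
          exact hstep.trans (by gcongr)
      _ = _ := by
          rw [wordDeriv, abs_mul, List.length_cons, Finset.sum_range_succ, mul_add,
            Real.exp_add]
          ring

variable [Finite Λ]

theorem exists_pos_le_abs_f' :
    ∃ b : ℝ, 0 < b ∧ b ≤ 1 ∧ ∀ i, ∀ x ∈ Icc (0 : ℝ) 1, b ≤ |F.f' i x| := by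
  have hmin : ∀ i, ∃ bᵢ : ℝ, 0 < bᵢ ∧ ∀ x ∈ Icc (0 : ℝ) 1, bᵢ ≤ |F.f' i x| := fun i => by
    obtain ⟨x, hx, hmin⟩ := isCompact_Icc.exists_isMinOn (nonempty_Icc.2 zero_le_one)
      (F.continuousOn_f' i).abs
    exact ⟨_, abs_pos.2 (F.nonvanishing i x hx), fun y hy => hmin hy⟩
  choose bᵢ hbᵢ_pos hbᵢ using hmin
  have hsmall : ∀ᶠ b in 𝓝[>] (0 : ℝ), 0 < b ∧ b < 1 ∧ ∀ i, b < bᵢ i :=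
    eventually_mem_nhdsWithin.and <| nhdsWithin_le_nhds <|
      (gt_mem_nhds one_pos).and (eventually_all.2 fun i => gt_mem_nhds (hbᵢ_pos i))
  obtain ⟨b, hb₀, hb₁, hb⟩ := hsmall.exists
  exact ⟨b, hb₀, hb₁.le, fun i x hx => (hb i).le.trans (hbᵢ i x hx)⟩

theorem exists_holder_const :
    ∃ H : ℝ, 0 ≤ H ∧ ∀ i, ∀ x ∈ Icc (0 : ℝ) 1, ∀ y ∈ Icc (0 : ℝ) 1,
      |F.f' i x - F.f' i y| ≤ H * |x - y| ^ F.exponent := by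
  choose Hᵢ hHᵢ using F.holder
  obtain ⟨H, hH₀, hH⟩ :=
    ((eventually_ge_atTop 0).and (eventually_all.2 fun i => eventually_ge_atTop (Hᵢ i))).exists
  exact ⟨H, hH₀, fun i x hx y hy => (hHᵢ i x hx y hy).trans (by gcongr; exact hH i)⟩

theorem exists_wordDerivNorm_le_mul_abs_wordDeriv :
    ∃ D : ℝ, 0 < D ∧ ∀ w : List Λ, ∀ y ∈ Icc (0 : ℝ) 1,
      wordDerivNorm F.f F.f' w ≤ D * |wordDeriv F.f F.f' w y| := by
  obtain ⟨b, hb₀, -, hb⟩ := F.exists_pos_le_abs_f'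
  obtain ⟨H, hH₀, hH⟩ := F.exists_holder_const
  set s : ℝ := F.ratio ^ F.exponent
  have hs₀ : 0 ≤ s := Real.rpow_nonneg F.ratio_pos.le _
  have hs₁ : s < 1 := Real.rpow_lt_one F.ratio_pos.le F.ratio_lt_one F.exponent_pos
  refine ⟨Real.exp (H / b * (1 - s)⁻¹), Real.exp_pos _, fun w y hy => ?_⟩
  obtain ⟨x, hx, hxw⟩ := F.exists_wordDerivNorm_eq w
  rw [hxw]
  have hgeom : ∑ k ∈ Finset.range w.length, s ^ k ≤ (1 - s)⁻¹ := by
    rw [Finset.range_eq_Ico]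
    simpa using geom_sum_Ico_le_of_lt_one (m := 0) (n := w.length) hs₀ hs₁
  refine (F.abs_wordDeriv_le_exp_mul hb₀ hH₀ hb hH w hx hy).trans ?_
  exact mul_le_mul_of_nonneg_right
    (Real.exp_le_exp.2 (mul_le_mul_of_nonneg_left hgeom (div_nonneg hH₀ hb₀.le))) (abs_nonneg _)

end BoundedDistortion

theorem inv_pow_mul_prod_le_abs_wordDeriv_flatten {D : ℝ} (hD : 0 < D)
    (hdist : ∀ w : List Λ, ∀ y ∈ Icc (0 : ℝ) 1,
      wordDerivNorm F.f F.f' w ≤ D * |wordDeriv F.f F.f' w y|)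
    (Ws : List (List Λ)) {x : ℝ} (hx : x ∈ Icc (0 : ℝ) 1) :
    D⁻¹ ^ Ws.length * (Ws.map (wordDerivNorm F.f F.f')).prod
      ≤ |wordDeriv F.f F.f' Ws.flatten x| := by
  induction Ws generalizing x with
  | nil => simp [wordDeriv]
  | cons W Ws ih =>
    have hW : D⁻¹ * wordDerivNorm F.f F.f' W
        ≤ |wordDeriv F.f F.f' W (compWord F.f Ws.flatten x)| := by
      rw [inv_mul_le_iff₀ hD]
      exact hdist W _ (F.compWord_mapsTo _ hx)
    calc D⁻¹ ^ (W :: Ws).length * ((W :: Ws).map (wordDerivNorm F.f F.f')).prod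
        = (D⁻¹ * wordDerivNorm F.f F.f' W)
            * (D⁻¹ ^ Ws.length * (Ws.map (wordDerivNorm F.f F.f')).prod) := by
          rw [List.length_cons, List.map_cons, List.prod_cons, pow_succ]
          ring
      _ ≤ |wordDeriv F.f F.f' W (compWord F.f Ws.flatten x)|
            * |wordDeriv F.f F.f' Ws.flatten x| :=
          mul_le_mul hW (ih hx) (mul_nonneg (pow_nonneg (inv_nonneg.2 hD.le) _)
            (List.prod_nonneg (by simp [F.wordDerivNorm_nonneg]))) (abs_nonneg _)
      _ = |wordDeriv F.f F.f' (W :: Ws).flatten x| := by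
          rw [List.flatten_cons, wordDeriv_append, abs_mul]

theorem pow_mul_inv_pow_mul_prod_le_wordDerivNorm {b D : ℝ} (hb : 0 ≤ b)
    (hbf' : ∀ i, ∀ x ∈ Icc (0 : ℝ) 1, b ≤ |F.f' i x|) (hD : 0 < D)
    (hdist : ∀ w : List Λ, ∀ y ∈ Icc (0 : ℝ) 1,
      wordDerivNorm F.f F.f' w ≤ D * |wordDeriv F.f F.f' w y|)
    (Ws : List (List Λ)) (T : List Λ) :
    b ^ T.length * (D⁻¹ ^ Ws.length * (Ws.map (wordDerivNorm F.f F.f')).prod)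
      ≤ wordDerivNorm F.f F.f' (Ws.flatten ++ T) := by
  have h0 : (0 : ℝ) ∈ Icc (0 : ℝ) 1 := left_mem_Icc.2 zero_le_one
  refine le_trans ?_ (F.abs_wordDeriv_le_wordDerivNorm _ h0)
  rw [wordDeriv_append, abs_mul, mul_comm]
  exact mul_le_mul
    (F.inv_pow_mul_prod_le_abs_wordDeriv_flatten hD hdist Ws (F.compWord_mapsTo T h0))
    (F.pow_le_abs_wordDeriv hb hbf' T h0) (pow_nonneg hb _) (abs_nonneg _)

theorem exists_rhoN_eq_prod_and_rho_concatMap_eq {n : ℕ} (hn : 0 < n) {u v : ℕ → Fin n → Λ}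
    (huv : u ≠ v) :
    ∃ (Ws : List (List Λ)) (T : List Λ), (∀ W ∈ Ws, W.length = n) ∧ T.length < n ∧
      rhoN F n u v = (Ws.map (wordDerivNorm F.f F.f')).prod ∧
      rho F (concatMap n hn u) (concatMap n hn v) = wordDerivNorm F.f F.f' (Ws.flatten ++ T) := by
  obtain ⟨m, hm, hmv, hρN⟩ := rhoDist_of_ne
    (fun L => (L.map fun blk => wordDerivNorm F.f F.f' (List.ofFn blk)).prod) huv
  obtain ⟨L, hL, hLv, hρ⟩ := rhoDist_of_ne (wordDerivNorm F.f F.f')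
    ((concatMap_injective hn).ne huv)
  obtain ⟨T, hT, hprefix⟩ := exists_ofFn_concatMap_eq_flatten_append hn hm hmv hL hLv
  refine ⟨List.ofFn fun k : Fin m => List.ofFn (u k), T, ?_, hT, ?_, ?_⟩
  · simp [List.mem_ofFn]
  · rw [rhoN, hρN, List.map_ofFn, List.map_ofFn]
    rfl
  · rw [rho, hρ, hprefix]

end ConformalIFS

theorem stmt7_general {Λ : Type} [Fintype Λ] (F : ConformalIFS Λ) :
    ∃ C : ℝ, 0 < C ∧ ∀ (n : ℕ) (hn : 0 < n), ∃ c : ℝ, 0 < c ∧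
      ∀ u v : ℕ → (Fin n → Λ),
        c * (rhoN F n u v) ^ ((1 : ℝ) + C / n)
            ≤ rho F (concatMap n hn u) (concatMap n hn v) ∧
        rho F (concatMap n hn u) (concatMap n hn v) ≤ rhoN F n u v := by
  obtain ⟨b, hb₀, hb₁, hb⟩ := F.exists_pos_le_abs_f'
  obtain ⟨D, hD₀, hD⟩ := F.exists_wordDerivNorm_le_mul_abs_wordDeriv
  obtain ⟨C, hC₀, hC⟩ := exists_pos_rpow_le F.ratio_pos F.ratio_lt_one (inv_pos.2 hD₀)
  refine ⟨C, hC₀, fun n hn => ⟨b ^ n, pow_pos hb₀ n, fun u v => ?_⟩⟩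
  have hexp : (1 : ℝ) + C / n ≠ 0 := by positivity
  rcases eq_or_ne u v with rfl | huv
  · simp [rho, rhoN, rhoDist_self, Real.zero_rpow hexp]
  obtain ⟨Ws, T, hWs, hT, hρN, hρ⟩ := F.exists_rhoN_eq_prod_and_rho_concatMap_eq hn huv
  rw [hρN, hρ]
  set P := (Ws.map (wordDerivNorm F.f F.f')).prod
  have hP : 0 ≤ P := List.prod_nonneg (by simp [F.wordDerivNorm_nonneg])
  -- `P ≤ ratio ^ (n |Ws|)`, so the extra power `P ^ (C / n)` absorbs the distortion `D⁻¹ ^ |Ws|`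
  have hPC : P ^ (C / n) ≤ D⁻¹ ^ Ws.length :=
    (rpow_div_le_pow_of_le_pow_mul hP F.ratio_pos.le hC₀.le hn
      (F.prod_map_wordDerivNorm_le Ws hWs)).trans
      (pow_le_pow_left₀ (Real.rpow_nonneg F.ratio_pos.le C) hC _)
  refine ⟨?_, F.wordDerivNorm_flatten_append_le Ws T⟩
  calc b ^ n * P ^ ((1 : ℝ) + C / n) = b ^ n * (P ^ (C / n) * P) := by
        rw [Real.rpow_add' hP hexp, Real.rpow_one, mul_comm P]
    _ ≤ b ^ T.length * (D⁻¹ ^ Ws.length * P) :=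
        mul_le_mul (pow_le_pow_of_le_one hb₀.le hb₁ hT.le)
          (mul_le_mul_of_nonneg_right hPC hP) (mul_nonneg (Real.rpow_nonneg hP _) hP)
          (pow_nonneg hb₀.le _)
    _ ≤ wordDerivNorm F.f F.f' (Ws.flatten ++ T) :=
        F.pow_mul_inv_pow_mul_prod_le_wordDerivNorm hb₀.le hb hD₀ hD Ws T

/-- Hölder comparison between `ρ∘γ_n` and `ρ_n`. -/
theorem stmt7 {Λ : Type} [Fintype Λ] [Nonempty Λ] (F : ConformalIFS Λ) :
    ∃ C : ℝ, 0 < C ∧ ∀ (n : ℕ) (hn : 0 < n), ∃ c : ℝ, 0 < c ∧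
      ∀ u v : ℕ → (Fin n → Λ),
        c * (rhoN F n u v) ^ ((1 : ℝ) + C / n)
            ≤ rho F (concatMap n hn u) (concatMap n hn v) ∧
        rho F (concatMap n hn u) (concatMap n hn v) ≤ rhoN F n u v :=
  stmt7_general F

end
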